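/- arXiv:1012.0132 — 3 statements merged into one kernel-verified Lean document; each statement's English description precedes it below -/
import Mathlib

section
/- Let $m \geq 2$ and let $P$ be a $2m \times 2$ complex matrix with columns $P_1, P_2$, entries $p_{ij}$. Assume $p_{2m,1} \neq 0$, $\Delta := p_{2m-1,1} p_{2m,2} - p_{2m-1,2} p_{2m,1} \neq 0$, and $P_1^\top \Omega_{2m} P_2 = 1$. Then there exists an upper unitriangular matrix $u_1 \in \mathrm{Sp}_{2m}$ such that $u_1 P$ has all entries zero except: the $(1,2)$ entry equal to $-1/p_{2m,1}$, the $(2m-1, 2)$ entry equal to $-\Delta/p_{2m,1}$, and the last row equal to $(p_{2m,1}, p_{2m,2})$. -/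
open Matrix

/-- The matrix `Ω_{2n} = [[0, Fₙ], [-Fₙ, 0]]` of the standard symplectic form,
with `Fₙ` the antidiagonal permutation matrix. -/
noncomputable def OmegaMat (n : ℕ) : Matrix (Fin (2 * n)) (Fin (2 * n)) ℂ :=
  fun i j => if (i : ℕ) + (j : ℕ) = 2 * n - 1 then (if (i : ℕ) < n then 1 else -1) else 0

/-!
For vectors `e`, `d` with `ω(e, d) = 0`, where `ω(x, y) = xᵀ Ω y`, the shear
`x ↦ x + ω(d, x) e + ω(e, x) d` is symplectic. For `e = e_k` with `k ≤ m` and `d` supported in the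
rows above `2m + 1 - k` it is also upper unitriangular, and a suitable such `d` moves any `q` with
`q_{2m+1-k} ≠ 0` to any `r` that agrees with `q` from row `2m + 1 - k` on. With `k = 1` this clears
the first column of `P` except its last entry; with `k = 2` it then clears the second column outside
rows `1`, `2m - 1`, `2m` while fixing the first.

The three surviving entries are forced: an upper unitriangular matrix keeps the last row and the
`2 × 2` minor `Δ` of the last two rows, and a symplectic one keeps the pairing `P₁ᵀ Ω P₂ = 1`.

Rows are counted from `1` here but from `0` in `Fin (2 * m)`, where row `2m + 1 - k` is the pivot
`j` and `e_k` is `Pi.single j.rev 1`.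
-/

namespace Matrix

section Shear

variable {n R : Type*} [Fintype n] [CommRing R] {Ω : Matrix n n R}

theorem dotProduct_mulVec_swap (hΩ : Ωᵀ = -Ω) (x y : n → R) :
    x ⬝ᵥ Ω *ᵥ y = -(y ⬝ᵥ Ω *ᵥ x) := by
  rw [dotProduct_mulVec, ← mulVec_transpose, hΩ, neg_mulVec, neg_dotProduct, dotProduct_comm]

variable [DecidableEq n]

variable (Ω) in
def symplecticShear (e d : n → R) : Matrix n n R :=
  1 + vecMulVec e (d ᵥ* Ω) + vecMulVec d (e ᵥ* Ω)

variable (Ω) in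
theorem symplecticShear_mulVec (e d x : n → R) :
    symplecticShear Ω e d *ᵥ x = x + (d ⬝ᵥ Ω *ᵥ x) • e + (e ⬝ᵥ Ω *ᵥ x) • d := by
  simp [symplecticShear, add_mulVec, vecMulVec_mulVec, dotProduct_mulVec]

theorem transpose_mul_mul_eq_iff {A : Matrix n n R} :
    Aᵀ * Ω * A = Ω ↔ ∀ x y, (A *ᵥ x) ⬝ᵥ Ω *ᵥ (A *ᵥ y) = x ⬝ᵥ Ω *ᵥ y := by
  have h : ∀ x y, x ⬝ᵥ (Aᵀ * Ω * A) *ᵥ y = (A *ᵥ x) ⬝ᵥ Ω *ᵥ (A *ᵥ y) := fun x y => by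
    rw [← mulVec_mulVec, ← mulVec_mulVec, dotProduct_mulVec x Aᵀ, vecMul_transpose]
  refine ⟨fun hA x y => by rw [← h, hA], fun hA => ?_⟩
  ext i j
  simpa using (h (Pi.single i 1) (Pi.single j 1)).trans (hA _ _)

theorem transpose_mul_mul_mul_eq {A B : Matrix n n R} (hA : Aᵀ * Ω * A = Ω)
    (hB : Bᵀ * Ω * B = Ω) : (A * B)ᵀ * Ω * (A * B) = Ω :=
  transpose_mul_mul_eq_iff.mpr fun x y => by
    rw [← mulVec_mulVec, ← mulVec_mulVec, transpose_mul_mul_eq_iff.mp hA,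
      transpose_mul_mul_eq_iff.mp hB]

end Shear

section Field

variable {n K : Type*} [Fintype n] [Field K] {Ω : Matrix n n K}

/-- The `e`-component cancels the `ω(d, q) • e` term of the shear applied to `q`. -/
noncomputable def shearVector (Ω : Matrix n n K) (e q r : n → K) : n → K :=
  (e ⬝ᵥ Ω *ᵥ q)⁻¹ • (r - q) - ((r ⬝ᵥ Ω *ᵥ q) / (2 * (e ⬝ᵥ Ω *ᵥ q) ^ 2)) • e

theorem symplecticShear_shearVector_mulVec_of_eq [DecidableEq n] {e q r x : n → K}
    (hex : e ⬝ᵥ Ω *ᵥ x = 0) (hrx : r ⬝ᵥ Ω *ᵥ x = q ⬝ᵥ Ω *ᵥ x) :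
    symplecticShear Ω e (shearVector Ω e q r) *ᵥ x = x := by
  simp [symplecticShear_mulVec, shearVector, sub_dotProduct, hex, hrx]

variable [NeZero (2 : K)]

theorem dotProduct_mulVec_self (hΩ : Ωᵀ = -Ω) (x : n → K) : x ⬝ᵥ Ω *ᵥ x = 0 := by
  have h2 : (2 : K) * (x ⬝ᵥ Ω *ᵥ x) = 0 := by linear_combination dotProduct_mulVec_swap hΩ x x
  exact (mul_eq_zero.mp h2).resolve_left two_ne_zero

theorem dotProduct_mulVec_shearVector (hΩ : Ωᵀ = -Ω) {e q r : n → K}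
    (hr : e ⬝ᵥ Ω *ᵥ r = e ⬝ᵥ Ω *ᵥ q) : e ⬝ᵥ Ω *ᵥ shearVector Ω e q r = 0 := by
  simp only [shearVector, mulVec_sub, mulVec_smul, dotProduct_sub, dotProduct_smul, smul_eq_mul,
    dotProduct_mulVec_self hΩ, hr]
  ring

variable [DecidableEq n]

theorem symplecticShear_transpose_mul_mul (hΩ : Ωᵀ = -Ω) {e d : n → K}
    (hed : e ⬝ᵥ Ω *ᵥ d = 0) :
    (symplecticShear Ω e d)ᵀ * Ω * symplecticShear Ω e d = Ω := by
  refine transpose_mul_mul_eq_iff.mpr fun x y => ?_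
  have hde : d ⬝ᵥ Ω *ᵥ e = 0 := by rw [dotProduct_mulVec_swap hΩ, hed, neg_zero]
  simp only [symplecticShear_mulVec, mulVec_add, mulVec_smul, dotProduct_add, add_dotProduct,
    dotProduct_smul, smul_dotProduct, smul_eq_mul, dotProduct_mulVec_self hΩ, hed, hde,
    dotProduct_mulVec_swap hΩ x e, dotProduct_mulVec_swap hΩ x d]
  ring

theorem symplecticShear_shearVector_mulVec (hΩ : Ωᵀ = -Ω) {e q : n → K}
    (hq : e ⬝ᵥ Ω *ᵥ q ≠ 0) (r : n → K) :
    symplecticShear Ω e (shearVector Ω e q r) *ᵥ q = r := by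
  rw [symplecticShear_mulVec]
  simp only [shearVector, sub_dotProduct, smul_dotProduct, smul_eq_mul, dotProduct_mulVec_self hΩ]
  ext i
  simp only [Pi.add_apply, Pi.smul_apply, Pi.sub_apply, smul_eq_mul]
  field_simp
  ring

end Field

section Unitriangular

variable {α R : Type*} [LinearOrder α] [Fintype α] [CommRing R]

def IsUpperUnitriangular (u : Matrix α α R) : Prop :=
  (∀ i, u i i = 1) ∧ u.BlockTriangular id

variable {u v : Matrix α α R}

theorem IsUpperUnitriangular.mul (hu : IsUpperUnitriangular u) (hv : IsUpperUnitriangular v) :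
    IsUpperUnitriangular (u * v) := by
  refine ⟨fun i => ?_, hu.2.mul hv.2⟩
  rw [mul_apply, Fintype.sum_eq_single i fun j hj => ?_, hu.1, hv.1, one_mul]
  rcases hj.lt_or_gt with hji | hij
  · rw [hu.2 hji, zero_mul]
  · rw [hv.2 hij, mul_zero]

theorem IsUpperUnitriangular.mulVec_apply_of_isTop (hu : IsUpperUnitriangular u) {j : α}
    (hj : IsTop j) (x : α → R) : (u *ᵥ x) j = x j := by
  rw [mulVec, dotProduct, Fintype.sum_eq_single j fun l hl => ?_, hu.1, one_mul]
  rw [hu.2 (lt_of_le_of_ne (hj l) hl), zero_mul]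

theorem IsUpperUnitriangular.mulVec_apply_of_covBy (hu : IsUpperUnitriangular u) {i j : α}
    (hij : i ⋖ j) (hj : IsTop j) (x : α → R) : (u *ᵥ x) i = x i + u i j * x j := by
  rw [mulVec, dotProduct, Fintype.sum_eq_add i j hij.ne fun l ⟨hli, hlj⟩ => ?_, hu.1, one_mul]
  rcases hli.lt_or_gt with hl | hl
  · rw [hu.2 hl, zero_mul]
  · exact absurd (lt_of_le_of_ne (hj l) hlj) (hij.2 hl)

theorem IsUpperUnitriangular.mulVec_minor (hu : IsUpperUnitriangular u) {i j : α}
    (hij : i ⋖ j) (hj : IsTop j) (x y : α → R) :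
    (u *ᵥ x) i * (u *ᵥ y) j - (u *ᵥ y) i * (u *ᵥ x) j = x i * y j - y i * x j := by
  simp only [hu.mulVec_apply_of_covBy hij hj, hu.mulVec_apply_of_isTop hj]
  ring

end Unitriangular

end Matrix

theorem Fin.isTop_of_val_eq {n : ℕ} {i : Fin n} (hi : (i : ℕ) = n - 1) : IsTop i :=
  fun j => Fin.le_def.mpr (by have := j.isLt; omega)

section OmegaMat

variable {m : ℕ}

theorem OmegaMat_mulVec_apply (v : Fin (2 * m) → ℂ) (i : Fin (2 * m)) :
    (OmegaMat m *ᵥ v) i = (if (i : ℕ) < m then 1 else -1) * v i.rev := by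
  rw [mulVec, dotProduct, Fintype.sum_eq_single i.rev fun j hj => ?_]
  · rw [OmegaMat, if_pos (by rw [Fin.val_rev]; omega)]
  · rw [OmegaMat, if_neg, zero_mul]
    contrapose! hj
    ext
    rw [Fin.val_rev]
    omega

theorem OmegaMat_transpose : (OmegaMat m)ᵀ = -OmegaMat m := by
  ext i j
  rw [transpose_apply, neg_apply]
  unfold OmegaMat
  split_ifs <;> first | omega | simp

theorem vecMul_OmegaMat_apply (v : Fin (2 * m) → ℂ) (j : Fin (2 * m)) :
    (v ᵥ* OmegaMat m) j = -((if (j : ℕ) < m then 1 else -1) * v j.rev) := by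
  rw [← mulVec_transpose, OmegaMat_transpose, neg_mulVec, Pi.neg_apply, OmegaMat_mulVec_apply]

theorem single_dotProduct_OmegaMat_mulVec_of_le {j : Fin (2 * m)} (hj : m ≤ (j : ℕ)) (c : ℂ)
    (v : Fin (2 * m) → ℂ) : Pi.single j c ⬝ᵥ OmegaMat m *ᵥ v = -(c * v j.rev) := by
  rw [single_dotProduct, OmegaMat_mulVec_apply, if_neg (by omega)]
  ring

theorem isUpperUnitriangular_symplecticShear_single {j : Fin (2 * m)} {d : Fin (2 * m) → ℂ}
    (hd : ∀ i, j ≤ i → d i = 0) :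
    IsUpperUnitriangular (symplecticShear (OmegaMat m) (Pi.single j.rev 1) d) := by
  set e : Fin (2 * m) → ℂ := Pi.single j.rev 1
  have entry : ∀ a b, symplecticShear (OmegaMat m) e d a b = (1 : Matrix _ _ ℂ) a b
      - (if (b : ℕ) < m then 1 else -1) * (e a * d b.rev + d a * e b.rev) := by
    intro a b
    simp only [symplecticShear, Matrix.add_apply, vecMulVec_apply, vecMul_OmegaMat_apply]
    ring
  have vanish : ∀ a b, b ≤ a → e a * d b.rev + d a * e b.rev = 0 := by
    intro a b hba
    have h₁ : e a * d b.rev = 0 := by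
      rcases eq_or_ne a j.rev with rfl | haj
      · rw [hd _ (by simpa using Fin.rev_le_rev.mpr hba), mul_zero]
      · simp only [e, Pi.single_eq_of_ne haj, zero_mul]
    have h₂ : d a * e b.rev = 0 := by
      rcases eq_or_ne b.rev j.rev with hbj | hbj
      · rw [hd a (by rw [← Fin.rev_rev j, ← hbj, Fin.rev_rev]; exact hba), zero_mul]
      · simp only [e, Pi.single_eq_of_ne hbj, mul_zero]
    rw [h₁, h₂, add_zero]
  refine ⟨fun a => ?_, fun a b (hba : b < a) => ?_⟩
  · rw [entry, vanish a a le_rfl, one_apply_eq, mul_zero, sub_zero]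
  · rw [entry, vanish a b hba.le, one_apply_ne hba.ne', mul_zero, sub_zero]

theorem exists_isUpperUnitriangular_symplectic_mulVec_eq {j : Fin (2 * m)} (hj : m ≤ (j : ℕ))
    {q r : Fin (2 * m) → ℂ} (hq : q j ≠ 0) (hr : ∀ i, j ≤ i → r i = q i) :
    ∃ u, IsUpperUnitriangular u ∧ uᵀ * OmegaMat m * u = OmegaMat m ∧ u *ᵥ q = r ∧
      ∀ x, x j = 0 → r ⬝ᵥ OmegaMat m *ᵥ x = q ⬝ᵥ OmegaMat m *ᵥ x → u *ᵥ x = x := by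
  set e : Fin (2 * m) → ℂ := Pi.single j.rev 1
  have he : ∀ x, e ⬝ᵥ OmegaMat m *ᵥ x = x j := fun x => by
    rw [single_dotProduct, OmegaMat_mulVec_apply, Fin.rev_rev,
      if_pos (by rw [Fin.val_rev]; omega), one_mul, one_mul]
  have hjj : j.rev < j := by rw [Fin.lt_def, Fin.val_rev]; omega
  refine ⟨symplecticShear (OmegaMat m) e (shearVector (OmegaMat m) e q r),
    isUpperUnitriangular_symplecticShear_single fun i hi => ?_,
    symplecticShear_transpose_mul_mul OmegaMat_transpose
      (dotProduct_mulVec_shearVector OmegaMat_transpose (by rw [he, he, hr _ le_rfl])),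
    symplecticShear_shearVector_mulVec OmegaMat_transpose (by rwa [he]) r,
    fun x hx hrx => symplecticShear_shearVector_mulVec_of_eq (by rw [he, hx]) hrx⟩
  simp [shearVector, e, hr i hi, Pi.single_eq_of_ne (hjj.trans_le hi).ne']

theorem exists_isUpperUnitriangular_symplectic_mulVec_eq_single {top : Fin (2 * m)}
    (htop : (top : ℕ) = 2 * m - 1) {p : Fin (2 * m) → ℂ} (hp : p top ≠ 0) :
    ∃ u, IsUpperUnitriangular u ∧ uᵀ * OmegaMat m * u = OmegaMat m ∧
      u *ᵥ p = Pi.single top (p top) := by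
  obtain ⟨u, hu, hs, hup, -⟩ := exists_isUpperUnitriangular_symplectic_mulVec_eq
    (by have := top.isLt; omega) hp (r := Pi.single top (p top)) fun i hi => by
      rw [le_antisymm (Fin.isTop_of_val_eq htop i) hi, Pi.single_eq_same]
  exact ⟨u, hu, hs, hup⟩

theorem exists_isUpperUnitriangular_symplectic_mulVec_eq_zero (hm : 2 ≤ m)
    {sub top : Fin (2 * m)} (hsub : (sub : ℕ) = 2 * m - 2) (htop : (top : ℕ) = 2 * m - 1)
    {q : Fin (2 * m) → ℂ} (hq : q sub ≠ 0) (c : ℂ) :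
    ∃ u, IsUpperUnitriangular u ∧ uᵀ * OmegaMat m * u = OmegaMat m ∧
      (∀ i, i ≠ top.rev → i < sub → (u *ᵥ q) i = 0) ∧
      u *ᵥ Pi.single top c = Pi.single top c := by
  have hcov : sub ⋖ top := Fin.covBy_iff.mpr (Nat.covBy_iff_add_one_eq.mpr (by omega))
  have hrev : top.rev < sub := by rw [Fin.lt_def, Fin.val_rev]; omega
  set r : Fin (2 * m) → ℂ :=
    Pi.single top.rev (q top.rev) + Pi.single sub (q sub) + Pi.single top (q top)
  obtain ⟨u, hu, hs, huq, hfix⟩ := exists_isUpperUnitriangular_symplectic_mulVec_eq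
    (by omega) hq (r := r) fun i hi => by
      rcases hi.eq_or_lt with rfl | hlt
      · simp [r, hrev.ne', hcov.ne]
      · obtain rfl : i = top :=
          (Fin.isTop_of_val_eq htop i).eq_or_lt.resolve_right (hcov.2 hlt)
        simp [r, (hrev.trans hcov.lt).ne', hcov.ne']
  refine ⟨u, hu, hs, fun i hi₀ hi => ?_, hfix _ (Pi.single_eq_of_ne hcov.ne _) ?_⟩
  · simp [huq, r, hi₀, hi.ne, (hi.trans hcov.lt).ne]
  · have hr : r top.rev = q top.rev := by simp [r, hrev.ne, (hrev.trans hcov.lt).ne]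
    rw [dotProduct_mulVec_swap OmegaMat_transpose r, dotProduct_mulVec_swap OmegaMat_transpose q,
      single_dotProduct_OmegaMat_mulVec_of_le (by omega),
      single_dotProduct_OmegaMat_mulVec_of_le (by omega), hr]

theorem mulVec_apply_eq_of_mulVec_eq_single {u : Matrix (Fin (2 * m)) (Fin (2 * m)) ℂ}
    (hu : IsUpperUnitriangular u) (hs : uᵀ * OmegaMat m * u = OmegaMat m)
    {sub top : Fin (2 * m)} (hsub : (sub : ℕ) = 2 * m - 2) (htop : (top : ℕ) = 2 * m - 1)
    {p y : Fin (2 * m) → ℂ} (hp : p top ≠ 0) (hup : u *ᵥ p = Pi.single top (p top))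
    (hpy : p ⬝ᵥ OmegaMat m *ᵥ y = 1) :
    (u *ᵥ y) top.rev = -(1 / p top) ∧
    (u *ᵥ y) sub = -((p sub * y top - y sub * p top) / p top) ∧
    (u *ᵥ y) top = y top := by
  have hcov : sub ⋖ top := Fin.covBy_iff.mpr (Nat.covBy_iff_add_one_eq.mpr (by omega))
  have htop' := Fin.isTop_of_val_eq htop
  have hpair := (transpose_mul_mul_eq_iff.mp hs p y).trans hpy
  have hminor := hu.mulVec_minor hcov htop' p y
  rw [hup, single_dotProduct_OmegaMat_mulVec_of_le (by omega)] at hpair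
  rw [hup, Pi.single_eq_of_ne hcov.ne, Pi.single_eq_same, hu.mulVec_apply_of_isTop htop'] at hminor
  refine ⟨?_, ?_, hu.mulVec_apply_of_isTop htop' y⟩
  · field_simp
    linear_combination -hpair
  · field_simp
    linear_combination -hminor

end OmegaMat

/-- Lemma 4 (first matrix): if `P` is a `2m × 2` matrix with `p_{2m,1} ≠ 0`,
`Δ = p_{2m-1,1}p_{2m,2} - p_{2m-1,2}p_{2m,1} ≠ 0` and `P₁ᵀ Ω P₂ = 1`, then some
upper unitriangular symplectic `u₁` takes `P` to the matrix with `(1,2)` entry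
`-1/p_{2m,1}`, `(2m-1,2)` entry `-Δ/p_{2m,1}`, last row `(p_{2m,1}, p_{2m,2})`
and zeros elsewhere. -/
theorem stmt_11 (m : ℕ) (hm : 2 ≤ m) (P : Matrix (Fin (2 * m)) (Fin 2) ℂ)
    (hp : P ⟨2 * m - 1, by omega⟩ 0 ≠ 0)
    (hΔ : P ⟨2 * m - 2, by omega⟩ 0 * P ⟨2 * m - 1, by omega⟩ 1 -
        P ⟨2 * m - 2, by omega⟩ 1 * P ⟨2 * m - 1, by omega⟩ 0 ≠ 0)
    (hsymp : (fun i => P i 0) ⬝ᵥ (OmegaMat m).mulVec (fun i => P i 1) = 1) :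
    ∃ u : Matrix (Fin (2 * m)) (Fin (2 * m)) ℂ,
      (∀ i, u i i = 1) ∧
      (∀ i j : Fin (2 * m), (j : ℕ) < (i : ℕ) → u i j = 0) ∧
      uᵀ * OmegaMat m * u = OmegaMat m ∧
      (∀ i : Fin (2 * m),
        (u * P) i 0 = if (i : ℕ) = 2 * m - 1 then P ⟨2 * m - 1, by omega⟩ 0 else 0) ∧
      (∀ i : Fin (2 * m),
        (u * P) i 1 =
          if (i : ℕ) = 0 then -(1 / P ⟨2 * m - 1, by omega⟩ 0)
          else if (i : ℕ) = 2 * m - 2 then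
            -((P ⟨2 * m - 2, by omega⟩ 0 * P ⟨2 * m - 1, by omega⟩ 1 -
                P ⟨2 * m - 2, by omega⟩ 1 * P ⟨2 * m - 1, by omega⟩ 0) /
              P ⟨2 * m - 1, by omega⟩ 0)
          else if (i : ℕ) = 2 * m - 1 then P ⟨2 * m - 1, by omega⟩ 1
          else 0) := by
  set top : Fin (2 * m) := ⟨2 * m - 1, by omega⟩
  set sub : Fin (2 * m) := ⟨2 * m - 2, by omega⟩
  set p : Fin (2 * m) → ℂ := fun i => P i 0
  set y : Fin (2 * m) → ℂ := fun i => P i 1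
  obtain ⟨u₁, hu₁, hs₁, hp₁⟩ :=
    exists_isUpperUnitriangular_symplectic_mulVec_eq_single (top := top) rfl (p := p) hp
  have hq_sub := (mulVec_apply_eq_of_mulVec_eq_single hu₁ hs₁ (sub := sub) rfl rfl hp hp₁ hsymp).2.1
  obtain ⟨u₂, hu₂, hs₂, hq₂, hp₂⟩ := exists_isUpperUnitriangular_symplectic_mulVec_eq_zero hm
    (sub := sub) (top := top) rfl rfl (q := u₁ *ᵥ y)
    (by rw [hq_sub]; exact neg_ne_zero.mpr (div_ne_zero hΔ hp)) (p top)
  have hu := hu₂.mul hu₁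
  have hs := transpose_mul_mul_mul_eq hs₂ hs₁
  have hup : (u₂ * u₁) *ᵥ p = Pi.single top (p top) := by rw [← mulVec_mulVec, hp₁, hp₂]
  obtain ⟨hy₀, hy_sub, hy_top⟩ :=
    mulVec_apply_eq_of_mulVec_eq_single hu hs (sub := sub) rfl rfl hp hup hsymp
  have hrev : (top.rev : ℕ) = 0 := by simp [top, Fin.val_rev]; omega
  refine ⟨u₂ * u₁, hu.1, hu.2, hs, fun i => ?_, fun i => ?_⟩
  · change ((u₂ * u₁) *ᵥ p) i = _
    simp [hup, Pi.single_apply, Fin.ext_iff, top, p]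
  · change ((u₂ * u₁) *ᵥ y) i = _
    split_ifs with h₀ h_sub h_top
    · rwa [show i = top.rev from Fin.ext (h₀.trans hrev.symm)]
    · rwa [show i = sub from Fin.ext h_sub]
    · rwa [show i = top from Fin.ext h_top]
    · rw [← mulVec_mulVec]
      exact hq₂ i (fun h => h₀ (by rw [h, hrev])) (Fin.lt_def.mpr (by simp [sub]; omega))
end

section
/- Let $A$ be a $\mathbb{C}$-algebra without zero divisors that is a unique factorization domain, graded by an abelian group $\Gamma$ with one-dimensional homogeneous components: $A = \bigoplus_{\mu \in S} A_\mu$ with $\dim A_\mu = 1$ for $\mu$ in a subsemigroup $S \subset \Gamma$, units of $A$ being the nonzero elements of $A_0 = \mathbb{C}$. Let $f_1, \dots, f_n$ be nonzero homogeneous elements of weights $\mu_1, \dots, \mu_n$ respectively, with $\mu_1, \dots, \mu_n$ linearly independent in $\Gamma \otimes \mathbb{Q}$, and suppose $A \subset \mathbb{C}[f_1, \dots, f_n, f_1^{-1}, \dots, f_k^{-1}]$ inside the fraction field, for some $k \leq n$. If every $f_i$ is irreducible in $A$, then $A = \mathbb{C}[f_1, \dots, f_n]$ and $S$ is the free commutative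 semigroup generated by $\mu_1, \dots, \mu_n$. -/
/-- Abstract form of assertion 3) of Theorem 7: let `A` be a `ℂ`-algebra which
is a domain and a UFD, graded by an abelian group `Γ` with at most
one-dimensional homogeneous components `W γ`, the units being the nonzero
constants (weight `0`). If `f₁, …, fₙ` are nonzero homogeneous elements of
linearly independent weights `μ₁, …, μₙ`, every element of `A` is a Laurent
polynomial in the `fᵢ` with negative exponents only in `f₁, …, f_k`, and every
`fᵢ` is irreducible, then `A = ℂ[f₁, …, fₙ]` and the semigroup of weights is
freely generated by `μ₁, …, μₙ`. -/
theorem stmt_13 {A : Type*} [CommRing A] [IsDomain A] [UniqueFactorizationMonoid A]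
    [Algebra ℂ A] {Γ : Type*} [AddCommGroup Γ] (W : Γ → Submodule ℂ A)
    (hone : (1 : A) ∈ W 0)
    (hmul : ∀ (γ δ : Γ) (a b : A), a ∈ W γ → b ∈ W δ → a * b ∈ W (γ + δ))
    (hsum : (⨆ γ, W γ) = ⊤)
    (hind : iSupIndep W)
    (hdim : ∀ (γ : Γ) (a b : A), a ∈ W γ → b ∈ W γ → b ≠ 0 → ∃ c : ℂ, a = c • b)
    (hunit : ∀ a : A, IsUnit a ↔ a ≠ 0 ∧ a ∈ W 0)
    (n k : ℕ) (hkn : k ≤ n) (f : Fin n → A) (μ : Fin n → Γ)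
    (hf : ∀ i, f i ∈ W (μ i)) (hne : ∀ i, f i ≠ 0)
    (hli : ∀ c : Fin n → ℤ, ∑ i, c i • μ i = 0 → c = 0)
    (hlaurent : ∀ a : A, ∃ N : ℕ,
      a * (∏ i ∈ Finset.univ.filter (fun i : Fin n => (i : ℕ) < k), f i) ^ N ∈
        Algebra.adjoin ℂ (Set.range f))
    (hirr : ∀ i, Irreducible (f i)) :
    Algebra.adjoin ℂ (Set.range f) = ⊤ ∧
      ∀ γ : Γ, W γ ≠ ⊥ ↔ ∃ c : Fin n → ℕ, γ = ∑ i, c i • μ i := by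
  classical
  set B := Algebra.adjoin ℂ (Set.range f) with hB
  -- sums of homogeneous elements vanishing implies each vanishes
  have hzero : ∀ (G : Finset Γ) (v : Γ → A), (∀ γ ∈ G, v γ ∈ W γ) →
      (∑ γ ∈ G, v γ) = 0 → ∀ γ ∈ G, v γ = 0 := by
    intro G v hv hs γ hγ
    have h1 : v γ ∈ W γ := hv γ hγ
    have heq : v γ = -∑ δ ∈ G.erase γ, v δ := by
      rw [← Finset.add_sum_erase G v hγ] at hs
      linear_combination hs
    have h2 : v γ ∈ ⨆ (δ) (_ : δ ≠ γ), W δ := by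
      rw [heq]
      refine Submodule.neg_mem _ (Submodule.sum_mem _ fun δ hδ => ?_)
      exact Submodule.mem_iSup_of_mem δ <| Submodule.mem_iSup_of_mem
        (Finset.ne_of_mem_erase hδ) (hv δ (Finset.mem_of_mem_erase hδ))
    exact Submodule.disjoint_def.mp (hind γ) _ h1 h2
  -- matching components of two decompositions
  have hmatch : ∀ (G₁ G₂ : Finset Γ) (v u : Γ → A), (∀ γ ∈ G₁, v γ ∈ W γ) →
      (∀ γ ∈ G₂, u γ ∈ W γ) → (∑ γ ∈ G₁, v γ) = (∑ γ ∈ G₂, u γ) →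
      ∀ γ ∈ G₁, v γ = if γ ∈ G₂ then u γ else 0 := by
    intro G₁ G₂ v u hv hu hs γ hγ
    have key := hzero (G₁ ∪ G₂)
      (fun δ => (if δ ∈ G₁ then v δ else 0) - (if δ ∈ G₂ then u δ else 0)) ?_ ?_ γ
      (Finset.mem_union_left _ hγ)
    · replace key : (if γ ∈ G₁ then v γ else 0) - (if γ ∈ G₂ then u γ else 0) = 0 := key
      rw [if_pos hγ] at key
      rcases eq_or_ne (v γ) ((if γ ∈ G₂ then u γ else 0)) with h | h
      · exact h
      · exact absurd (sub_eq_zero.mp key) h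
    · intro δ hδ
      refine Submodule.sub_mem _ ?_ ?_ <;> split <;>
        first | exact hv _ ‹_› | exact hu _ ‹_› | exact Submodule.zero_mem _
    · rw [Finset.sum_sub_distrib]
      rw [Finset.sum_ite_mem, Finset.sum_ite_mem, Finset.union_inter_cancel_left,
        Finset.union_inter_cancel_right, hs, sub_self]
  -- uniqueness of weights
  have huniq : ∀ (γ δ : Γ) (a : A), a ∈ W γ → a ∈ W δ → a ≠ 0 → γ = δ := by
    intro γ δ a h1 h2 h3
    by_contra hne'
    have := hzero {γ, δ} (fun ε => if ε = γ then a else -a) ?_ ?_ γ (by simp)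
    · simp at this; exact h3 this
    · intro ε hε
      show (if ε = γ then a else -a) ∈ W ε
      rcases Finset.mem_insert.mp hε with h | h
      · subst h; simpa
      · simp only [Finset.mem_singleton] at h; subst h
        rw [if_neg (Ne.symm hne')]; exact Submodule.neg_mem _ h2
    · rw [Finset.sum_pair hne']; simp [Ne.symm hne']
  have hinj : Function.Injective (algebraMap ℂ A) := (algebraMap ℂ A).injective
  have hprime : ∀ i, Prime (f i) :=
    fun i => UniqueFactorizationMonoid.irreducible_iff_prime.mp (hirr i)
  -- constants are homogeneous of weight 0
  have hconst : ∀ c : ℂ, algebraMap ℂ A c ∈ W 0 := by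
    intro c
    rw [Algebra.algebraMap_eq_smul_one]
    exact Submodule.smul_mem _ _ hone
  -- distinct f's do not divide each other
  have hnodvd : ∀ i j, i ≠ j → ¬ f i ∣ f j := by
    intro i j hij hdvd
    obtain ⟨u, hu⟩ := (hirr i).associated_of_dvd (hirr j) hdvd
    have hu0 : (u : A) ∈ W 0 := ((hunit _).mp u.isUnit).2
    have hj : f j ∈ W (μ i + 0) := by
      rw [← hu]; exact hmul _ _ _ _ (hf i) hu0
    have hμ : μ i + 0 = μ j := huniq _ _ _ hj (hf j) (hne j)
    rw [add_zero] at hμ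
    have hc := hli (Pi.single i 1 - Pi.single j 1) ?_
    · have := congrFun hc i
      simp [Pi.single_apply, hij] at this
    · simp only [Pi.sub_apply, sub_smul, Finset.sum_sub_distrib, Pi.single_apply]
      rw [show ∀ b : Fin n → Γ, (∑ x, (if x = i then (1:ℤ) else 0) • b x) = b i from
        fun b => by simp [ite_smul], show ∀ b : Fin n → Γ,
        (∑ x, (if x = j then (1:ℤ) else 0) • b x) = b j from fun b => by simp [ite_smul]]
      rw [hμ, sub_self]
  -- monomials
  set m : (Fin n → ℕ) → A := fun d => ∏ i, f i ^ d i with hm_def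
  set wt : (Fin n → ℕ) → Γ := fun d => ∑ i, d i • μ i with hwt_def
  have hpow : ∀ (i : Fin n) (e : ℕ), f i ^ e ∈ W (e • μ i) := by
    intro i e
    induction e with
    | zero => simpa using hone
    | succ e ih =>
      have := hmul _ _ _ _ (hf i) ih
      rw [pow_succ, mul_comm]
      convert this using 2
      rw [succ_nsmul, add_comm]
  have hmW : ∀ d, m d ∈ W (wt d) := by
    intro d
    have : ∀ s : Finset (Fin n), (∏ i ∈ s, f i ^ d i) ∈ W (∑ i ∈ s, d i • μ i) := by
      intro s
      induction s using Finset.cons_induction with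
      | empty => simpa using hone
      | cons a s ha ih =>
        rw [Finset.prod_cons, Finset.sum_cons]
        exact hmul _ _ _ _ (hpow a (d a)) ih
    exact this Finset.univ
  have hm0 : ∀ d, m d ≠ 0 := by
    intro d
    exact Finset.prod_ne_zero_iff.mpr fun i _ => pow_ne_zero _ (hne i)
  have hwt_inj : Function.Injective wt := by
    intro d e hde
    have h0 : ∑ i, ((d i : ℤ) - (e i : ℤ)) • μ i = 0 := by
      simp only [sub_smul, Finset.sum_sub_distrib, natCast_zsmul]
      rw [show (∑ i, d i • μ i) = wt d from rfl, show (∑ i, e i • μ i) = wt e from rfl,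
        hde, sub_self]
    have := hli _ h0
    funext i
    have := congrFun this i
    simp only [Pi.zero_apply, sub_eq_zero] at this
    exact_mod_cast this
  -- representation of elements of B
  have hB_rep : ∀ b ∈ B, ∃ p : MvPolynomial (Fin n) ℂ,
      b = ∑ d ∈ p.support, algebraMap ℂ A (p.coeff d) * m ⇑d := by
    intro b hb
    rw [hB, Algebra.adjoin_range_eq_range_aeval] at hb
    obtain ⟨p, hp⟩ := hb
    refine ⟨p, ?_⟩
    rw [← hp]
    show MvPolynomial.aeval f p = _
    rw [MvPolynomial.aeval_def, MvPolynomial.eval₂_eq']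
  -- a homogeneous nonzero divisor divides all homogeneous components
  have hdiv_comp : ∀ (γ₀ : Γ) (h : A), h ∈ W γ₀ → h ≠ 0 →
      ∀ {ι : Type} (F : Finset ι) (w : ι → Γ) (v : ι → A), Set.InjOn w F →
      (∀ i ∈ F, v i ∈ W (w i)) → (h ∣ ∑ i ∈ F, v i) → ∀ i ∈ F, h ∣ v i := by
    intro γ₀ h hhW hh0 ι F w v hwinj hvW ⟨t, ht⟩ i hi
    have htop : t ∈ ⨆ γ, W γ := by rw [hsum]; trivial
    obtain ⟨g, hgW, hgsum⟩ := (Submodule.mem_iSup_iff_exists_finsupp W t).mp htop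
    -- gather left side into Γ-indexed sum
    set v' : Γ → A := fun γ => ∑ j ∈ F.filter (fun j => w j = γ), v j with hv'_def
    have hsum1 : ∑ γ ∈ F.image w, v' γ = ∑ j ∈ F, v j :=
      Finset.sum_image' _ (fun j _ => rfl)
    have hv'W : ∀ γ, v' γ ∈ W γ := by
      intro γ
      refine Submodule.sum_mem _ fun j hj => ?_
      obtain ⟨hjF, hjw⟩ := Finset.mem_filter.mp hj
      rw [← hjw]; exact hvW j hjF
    have hv'i : v' (w i) = v i := by
      show (∑ j ∈ F.filter (fun j => w j = w i), v j) = v i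
      refine Finset.sum_eq_single_of_mem i (Finset.mem_filter.mpr ⟨hi, rfl⟩) ?_
      intro j hj hji
      exact absurd (hwinj (Finset.mem_of_mem_filter _ hj) hi (Finset.mem_filter.mp hj).2) hji
    -- gather right side
    set u : Γ → A := fun γ => h * ∑ δ ∈ g.support.filter (fun δ => γ₀ + δ = γ), g δ
      with hu_def
    have hsum2 : ∑ γ ∈ g.support.image (fun δ => γ₀ + δ), u γ = ∑ i ∈ F, v i := by
      rw [ht]
      have : ∀ δ₀ ∈ g.support, u (γ₀ + δ₀) =
          ∑ δ ∈ g.support.filter (fun δ => γ₀ + δ = γ₀ + δ₀), h * g δ := by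
        intro δ₀ _
        show h * (∑ δ ∈ g.support.filter (fun δ => γ₀ + δ = γ₀ + δ₀), g δ) = _
        exact Finset.mul_sum _ _ _
      have hgsum' : ∑ δ ∈ g.support, g δ = t := hgsum
      rw [Finset.sum_image' _ this, ← Finset.mul_sum, hgsum']
    have huW : ∀ γ, u γ ∈ W γ := by
      intro γ
      show h * (∑ δ ∈ g.support.filter (fun δ => γ₀ + δ = γ), g δ) ∈ W γ
      rw [Finset.mul_sum]
      refine Submodule.sum_mem _ fun δ hδ => ?_
      obtain ⟨-, hδγ⟩ := Finset.mem_filter.mp hδ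
      rw [← hδγ]
      exact hmul _ _ _ _ hhW (hgW δ)
    have := hmatch (F.image w) (g.support.image (fun δ => γ₀ + δ)) v' u
      (fun γ _ => hv'W γ) (fun γ _ => huW γ) (hsum1.trans hsum2.symm)
      (w i) (Finset.mem_image_of_mem w hi)
    rw [hv'i] at this
    rw [this]
    split
    · exact Dvd.intro _ rfl
    · exact dvd_zero h
  -- key lemma: quotient by f i stays in B
  have hquot : ∀ (i : Fin n) (t : A), f i * t ∈ B → t ∈ B := by
    intro i t hbt
    obtain ⟨p, hp⟩ := hB_rep _ hbt
    set s₁ := p.support.filter (fun d => ¬ d i = 0) with hs₁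
    set s₀ := p.support.filter (fun d => d i = 0) with hs₀
    have hsplit : f i * t = (∑ d ∈ s₀, algebraMap ℂ A (p.coeff d) * m ⇑d)
        + ∑ d ∈ s₁, algebraMap ℂ A (p.coeff d) * m ⇑d := by
      rw [hp]
      exact (Finset.sum_filter_add_sum_filter_not _ _ _).symm
    -- the s₁ part is f i times an element of B
    set q : A := ∑ d ∈ s₁, algebraMap ℂ A (p.coeff d) *
      (f i ^ (d i - 1) * ∏ j ∈ Finset.univ.erase i, f j ^ d j) with hq_def
    have hqB : q ∈ B := by
      refine Subalgebra.sum_mem _ fun d _ => ?_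
      refine Subalgebra.mul_mem _ (Subalgebra.algebraMap_mem _ _) ?_
      refine Subalgebra.mul_mem _ (Subalgebra.pow_mem _ ?_ _) ?_
      · exact Algebra.subset_adjoin (Set.mem_range_self i)
      · exact Subalgebra.prod_mem _ fun j _ =>
          Subalgebra.pow_mem _ (Algebra.subset_adjoin (Set.mem_range_self j)) _
    have hkey : ∑ d ∈ s₁, algebraMap ℂ A (p.coeff d) * m ⇑d = f i * q := by
      rw [hq_def, Finset.mul_sum]
      refine Finset.sum_congr rfl fun d hd => ?_
      have hdi : ¬ d i = 0 := (Finset.mem_filter.mp hd).2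
      have hm_eq : m ⇑d = f i * (f i ^ (d i - 1) * ∏ j ∈ Finset.univ.erase i, f j ^ d j) := by
        rw [hm_def]
        simp only
        rw [← Finset.mul_prod_erase Finset.univ _ (Finset.mem_univ i)]
        rw [show f i ^ d i = f i * f i ^ (d i - 1) by
          conv_lhs => rw [show d i = (d i - 1) + 1 from (Nat.succ_pred_eq_of_pos
            (Nat.pos_of_ne_zero hdi)).symm]
          rw [pow_succ, mul_comm]]
        ring
      rw [hm_eq]; ring
    -- the s₀ part is divisible by f i, but each term cannot be: so it's zero
    have hr_dvd : f i ∣ ∑ d ∈ s₀, algebraMap ℂ A (p.coeff d) * m ⇑d := by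
      refine ⟨t - q, ?_⟩
      have : (∑ d ∈ s₀, algebraMap ℂ A (p.coeff d) * m ⇑d) = f i * t - f i * q := by
        rw [hsplit, hkey]; ring
      rw [this, mul_sub]
    have hs₀_empty : ∀ d ∈ s₀, False := by
      intro d hd
      have hdvd := hdiv_comp (μ i) (f i) (hf i) (hne i) s₀ (fun d => wt ⇑d)
        (fun d => algebraMap ℂ A (p.coeff d) * m ⇑d) ?_ ?_ hr_dvd d hd
      · obtain ⟨hdp, hdi⟩ := Finset.mem_filter.mp hd
        have hc0 : p.coeff d ≠ 0 := MvPolynomial.mem_support_iff.mp hdp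
        have hcu : IsUnit (algebraMap ℂ A (p.coeff d)) :=
          (IsUnit.mk0 _ hc0).map (algebraMap ℂ A)
        rw [hcu.dvd_mul_left] at hdvd
        rw [hm_def] at hdvd
        obtain ⟨j, -, hj⟩ := (hprime i).exists_mem_finset_dvd hdvd
        have hij : f i ∣ f j := (hprime i).dvd_of_dvd_pow hj
        rcases eq_or_ne i j with rfl | hne'
        · rw [hdi, pow_zero] at hj
          exact (hirr i).not_isUnit (isUnit_of_dvd_one hj)
        · exact hnodvd i j hne' hij
      · intro d₁ hd₁ d₂ hd₂ h12
        exact DFunLike.coe_injective (hwt_inj h12)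
      · intro d _
        have := hmul 0 (wt ⇑d) _ _ (hconst (p.coeff d)) (hmW ⇑d)
        rwa [zero_add] at this
    have hr0 : (∑ d ∈ s₀, algebraMap ℂ A (p.coeff d) * m ⇑d) = 0 :=
      Finset.sum_eq_zero fun d hd => absurd hd (fun h => hs₀_empty d h)
    rw [hr0, zero_add, hkey] at hsplit
    have : t = q := mul_left_cancel₀ (hne i) hsplit
    rw [this]; exact hqB
  -- quotient by a product of f's stays in B
  have hprod_quot : ∀ (s : Finset (Fin n)) (t : A), t * (∏ i ∈ s, f i) ∈ B → t ∈ B := by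
    intro s
    induction s using Finset.cons_induction with
    | empty => intro t ht; simpa using ht
    | cons a s ha ih =>
      intro t ht
      have heq : (t * f a) * ∏ i ∈ s, f i = t * ∏ i ∈ Finset.cons a s ha, f i := by
        rw [Finset.prod_cons]; ring
      have htfa : t * f a ∈ B := ih _ (by rw [heq]; exact ht)
      exact hquot a t (by rwa [mul_comm])
  have hpow_quot : ∀ (N : ℕ) (t : A),
      t * (∏ i ∈ Finset.univ.filter (fun i : Fin n => (i : ℕ) < k), f i) ^ N ∈ B →
      t ∈ B := by
    intro N
    induction N with
    | zero => intro t ht; simpa using ht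
    | succ N ih =>
      intro t ht
      have heq : (t * (∏ i ∈ Finset.univ.filter (fun i : Fin n => (i : ℕ) < k), f i)) *
          (∏ i ∈ Finset.univ.filter (fun i : Fin n => (i : ℕ) < k), f i) ^ N =
          t * (∏ i ∈ Finset.univ.filter (fun i : Fin n => (i : ℕ) < k), f i) ^ (N + 1) := by
        rw [pow_succ]; ring
      exact hprod_quot _ t (ih _ (by rw [heq]; exact ht))
  -- Goal 1
  have goal1 : B = ⊤ := by
    rw [eq_top_iff]
    intro a _
    obtain ⟨N, hN⟩ := hlaurent a
    exact hpow_quot N a hN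
  refine ⟨goal1, fun γ => ⟨?_, ?_⟩⟩
  · intro hγ
    obtain ⟨a, haW, ha0⟩ := Submodule.exists_mem_ne_zero_of_ne_bot hγ
    have haB : a ∈ B := goal1 ▸ Submodule.mem_top (R := ℂ)
    obtain ⟨p, hp⟩ := hB_rep a haB
    have hps : p.support.Nonempty := by
      rcases Finset.eq_empty_or_nonempty p.support with h | h
      · rw [h, Finset.sum_empty] at hp; exact absurd hp ha0
      · exact h
    obtain ⟨d₀, hd₀⟩ := hps
    set cf : (Fin n →₀ ℕ) → A := fun d => algebraMap ℂ A (p.coeff d) * m ⇑d with hcf_def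
    have hp' : a = ∑ d ∈ p.support, cf d := hp
    set v' : Γ → A := fun δ => ∑ d ∈ p.support.filter (fun d : Fin n →₀ ℕ => wt ⇑d = δ),
      cf d with hv'_def
    have hsum1 : ∑ δ ∈ p.support.image (fun d : Fin n →₀ ℕ => wt ⇑d), v' δ = ∑ γ ∈ {γ}, a := by
      rw [Finset.sum_singleton, hp']
      exact Finset.sum_image' _ (fun d _ => rfl)
    have hv'W : ∀ δ, v' δ ∈ W δ := by
      intro δ
      refine Submodule.sum_mem _ fun d hdm => ?_
      obtain ⟨-, hdw⟩ := Finset.mem_filter.mp hdm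
      rw [← hdw]
      have := hmul 0 (wt ⇑d) _ _ (hconst (p.coeff d)) (hmW ⇑d)
      rwa [zero_add] at this
    have := hmatch _ {γ} v' (fun _ => a) (fun δ _ => hv'W δ)
      (fun δ hδ => by rw [Finset.mem_singleton] at hδ; rw [hδ]; exact haW) hsum1
      (wt ⇑d₀) (Finset.mem_image_of_mem _ hd₀)
    have hv'd₀ : v' (wt ⇑d₀) = cf d₀ := by
      rw [hv'_def]
      refine Finset.sum_eq_single_of_mem d₀ (Finset.mem_filter.mpr ⟨hd₀, rfl⟩) ?_
      intro d hdm hdd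
      exact absurd (DFunLike.coe_injective (hwt_inj (Finset.mem_filter.mp hdm).2)) hdd
    have hne0 : v' (wt ⇑d₀) ≠ 0 := by
      rw [hv'd₀]
      exact mul_ne_zero (fun h => MvPolynomial.mem_support_iff.mp hd₀
        (hinj (by rwa [map_zero]))) (hm0 ⇑d₀)
    rw [this] at hne0
    split at hne0
    · next h =>
      rw [Finset.mem_singleton] at h
      exact ⟨fun i => d₀ i, h.symm⟩
    · exact absurd rfl hne0
  · rintro ⟨c, rfl⟩
    refine Submodule.ne_bot_iff _ |>.mpr ⟨m c, hmW c, hm0 c⟩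
end

section
/- In the abstract setting of a $\Gamma$-graded UFD $A$ with one-dimensional weight spaces and nonzero homogeneous elements $f_1, \dots, f_n$ of linearly independent weights $\mu_1, \dots, \mu_n$ satisfying $A \subset \mathbb{C}[f_1, \dots, f_n, f_1^{-1}, \dots, f_k^{-1}]$: set $Z = \langle \mu_1, \dots, \mu_k \rangle + S\langle \mu_{k+1}, \dots, \mu_n \rangle$ (group generated by the first $k$ weights plus the semigroup generated by the rest). If for every decomposition $\mu_i = \nu_1 + \nu_2$ with $\nu_1, \nu_2$ weights of non-unit homogeneous elements of $A$, at least one of $\nu_1, \nu_2$ does not lie in $Z$, then $f_i$ is irreducible in $A$. -/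
/-- The set `Z = ⟨μ₁, …, μ_k⟩ + S⟨μ_{k+1}, …, μₙ⟩`: integer combinations of the
weights in which the last `n - k` coefficients are nonnegative. -/
def coneZ {Γ : Type*} [AddCommGroup Γ] (n k : ℕ) (μ : Fin n → Γ) : Set Γ :=
  {γ | ∃ c : Fin n → ℤ, (∀ j : Fin n, k ≤ (j : ℕ) → 0 ≤ c j) ∧ γ = ∑ j, c j • μ j}

/-!
The linear independence of the `μⱼ` and the Laurent hypothesis, which puts every weight of `A`
into `Z ⊆ ℤμ₁ + ⋯ + ℤμₙ`, make the grading a grading by `ℤⁿ`, and `ℤⁿ` can be ordered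
lexicographically. In a domain graded by a linearly ordered cancellative monoid the top (and
the bottom) components of two factors multiply to the only contribution to their degree, so the
factors of a homogeneous element are homogeneous. For `fᵢ = a * b` the weights of `a` and `b` then
add up to `μᵢ` and lie in `Z`, so by hypothesis one of them is `0`, and that factor is a unit.
-/

open DirectSum

section GradedDomain

variable {ι σ A : Type*} [DecidableEq ι] [AddCommMonoid ι] [Semiring A] [SetLike σ A]
  [AddSubmonoidClass σ A] {𝒜 : ι → σ} [GradedRing 𝒜] [∀ i (x : 𝒜 i), Decidable (x ≠ 0)]

theorem support_decompose_nonempty {a : A} (ha : a ≠ 0) : (decompose 𝒜 a).support.Nonempty := by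
  rw [Finset.nonempty_iff_ne_empty, Ne, DFinsupp.support_eq_empty, ← decompose_zero 𝒜,
    (decompose 𝒜).injective.eq_iff]
  exact ha

theorem mem_of_forall_mem_support_decompose_eq {a : A} {i : ι}
    (h : ∀ p ∈ (decompose 𝒜 a).support, p = i) : a ∈ 𝒜 i := by
  rw [← sum_support_decompose 𝒜 a]
  exact sum_mem fun p hp => h p hp ▸ (decompose 𝒜 a p).2

theorem coe_decompose_mul_add_of_unique {a b : A} {i j : ι}
    (hi : i ∈ (decompose 𝒜 a).support) (hj : j ∈ (decompose 𝒜 b).support)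
    (huniq : ∀ p ∈ (decompose 𝒜 a).support, ∀ q ∈ (decompose 𝒜 b).support,
      p + q = i + j → p = i ∧ q = j) :
    (decompose 𝒜 (a * b) (i + j) : A) = decompose 𝒜 a i * decompose 𝒜 b j := by
  rw [decompose_mul, coe_mul_apply, Finset.sum_eq_single_of_mem (i, j)]
  · simp [hi, hj]
  · simp only [Finset.mem_filter, Finset.mem_product, ne_eq, Prod.forall, Prod.mk.injEq]
    intro p q ⟨⟨hp, hq⟩, hpq⟩ hne
    exact absurd (huniq p hp q hq hpq) hne

end GradedDomain

theorem exists_add_eq_and_mem_of_mul_mem {ι σ A : Type*} [DecidableEq ι] [AddCommMonoid ι]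
    [LinearOrder ι] [IsOrderedCancelAddMonoid ι] [Semiring A] [NoZeroDivisors A] [SetLike σ A]
    [AddSubmonoidClass σ A] {𝒜 : ι → σ} [GradedRing 𝒜] {a b : A} {γ : ι} (ha : a ≠ 0)
    (hb : b ≠ 0) (hab : a * b ∈ 𝒜 γ) : ∃ i j, i + j = γ ∧ a ∈ 𝒜 i ∧ b ∈ 𝒜 j := by
  classical
  set sa := (decompose 𝒜 a).support
  set sb := (decompose 𝒜 b).support
  have hsa : sa.Nonempty := support_decompose_nonempty ha
  have hsb : sb.Nonempty := support_decompose_nonempty hb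
  have hextremal : ∀ i ∈ sa, ∀ j ∈ sb,
      (∀ p ∈ sa, ∀ q ∈ sb, p + q = i + j → p = i ∧ q = j) → i + j = γ := by
    intro i hi j hj huniq
    by_contra hne
    have h := coe_decompose_mul_add_of_unique hi hj huniq
    rw [decompose_of_mem_ne 𝒜 hab (Ne.symm hne)] at h
    exact mul_ne_zero (by simpa [sa] using hi) (by simpa [sb] using hj) h.symm
  have hmax : sa.max' hsa + sb.max' hsb = γ :=
    hextremal _ (sa.max'_mem hsa) _ (sb.max'_mem hsb) fun p hp q hq =>
      (add_eq_add_iff_eq_and_eq (sa.le_max' p hp) (sb.le_max' q hq)).mp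
  have hmin : sa.min' hsa + sb.min' hsb = γ :=
    hextremal _ (sa.min'_mem hsa) _ (sb.min'_mem hsb) fun p hp q hq hpq =>
      ((add_eq_add_iff_eq_and_eq (sa.min'_le p hp) (sb.min'_le q hq)).mp hpq.symm).imp
        Eq.symm Eq.symm
  obtain ⟨hmin_a, hmin_b⟩ := (add_eq_add_iff_eq_and_eq (sa.min'_le_max' hsa)
    (sb.min'_le_max' hsb)).mp (hmin.trans hmax.symm)
  refine ⟨sa.max' hsa, sb.max' hsb, hmax, mem_of_forall_mem_support_decompose_eq fun p hp => ?_,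
    mem_of_forall_mem_support_decompose_eq fun q hq => ?_⟩
  · exact le_antisymm (sa.le_max' p hp) (hmin_a ▸ sa.min'_le p hp)
  · exact le_antisymm (sb.le_max' q hq) (hmin_b ▸ sb.min'_le q hq)

section Pullback

variable {L Γ R A : Type*} [AddMonoid L] [AddMonoid Γ] [Ring R] [Ring A] [Module R A]
  (W : Γ → Submodule R A) (E : L →+ Γ)

instance SetLike.GradedMonoid.comp_addMonoidHom [SetLike.GradedMonoid W] :
    SetLike.GradedMonoid (W ∘ E) where
  one_mem := by rw [Function.comp_apply, map_zero]; exact SetLike.one_mem_graded W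
  mul_mem i j _ _ hi hj := by
    rw [Function.comp_apply, map_add]; exact SetLike.mul_mem_graded hi hj

theorem DirectSum.IsInternal.comp_addMonoidHom [DecidableEq L] (hind : iSupIndep W)
    (hsum : ⨆ γ, W γ = ⊤) (hE : Function.Injective E)
    (hrange : ∀ γ, W γ ≠ ⊥ → γ ∈ Set.range E) : IsInternal (W ∘ E) := by
  rw [isInternal_submodule_iff_iSupIndep_and_iSup_eq_top]
  refine ⟨hind.comp hE, eq_top_iff.mpr (hsum ▸ iSup_le fun γ => ?_)⟩
  by_cases hγ : W γ = ⊥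
  · exact hγ ▸ bot_le
  · obtain ⟨c, rfl⟩ := hrange γ hγ
    exact le_iSup (W ∘ E) c

end Pullback

theorem exists_add_eq_and_mem_of_mul_mem_of_linearIndependent {Γ R A : Type*} [AddCommGroup Γ]
    [Ring R] [Ring A] [NoZeroDivisors A] [Module R A] {W : Γ → Submodule R A}
    [SetLike.GradedMonoid W] (hind : iSupIndep W) (hsum : ⨆ γ, W γ = ⊤) {n : ℕ}
    {μ : Fin n → Γ} (hμ : LinearIndependent ℤ μ)
    (hspan : ∀ γ, W γ ≠ ⊥ → γ ∈ Submodule.span ℤ (Set.range μ)) {a b : A} {γ : Γ}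
    (ha : a ≠ 0) (hb : b ≠ 0) (hab : a * b ∈ W γ) : ∃ α β, α + β = γ ∧ a ∈ W α ∧ b ∈ W β := by
  classical
  let E : Lex (Fin n → ℤ) →+ Γ :=
    (Fintype.linearCombination ℤ μ).toAddMonoidHom.comp (ofLexAddEquiv _).toAddMonoidHom
  have hE : Function.Injective E :=
    hμ.fintypeLinearCombination_injective.comp (ofLexAddEquiv _).injective
  have hrange : ∀ γ, W γ ≠ ⊥ → γ ∈ Set.range E := fun γ hγ =>
    let ⟨c, hc⟩ := Submodule.mem_span_range_iff_exists_fun ℤ |>.mp (hspan γ hγ)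
    ⟨toLex c, hc⟩
  let : GradedRing (W ∘ E) :=
    { (IsInternal.comp_addMonoidHom W E hind hsum hE hrange).chooseDecomposition with }
  obtain ⟨c, rfl⟩ := hrange γ ((Submodule.ne_bot_iff _).mpr ⟨a * b, hab, mul_ne_zero ha hb⟩)
  obtain ⟨p, q, rfl, hp, hq⟩ := exists_add_eq_and_mem_of_mul_mem (𝒜 := W ∘ E) ha hb hab
  exact ⟨E p, E q, (map_add E p q).symm, hp, hq⟩

section Cone

variable {ι Γ R A : Type*} [AddCommMonoid Γ] [CommSemiring R] [CommSemiring A] [Algebra R A]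
  {W : Γ → Submodule R A} [SetLike.GradedMonoid W] {f : ι → A} {μ : ι → Γ}

theorem mem_iSup_closure_of_mem_adjoin (hf : ∀ i, f i ∈ W (μ i)) {x : A}
    (hx : x ∈ Algebra.adjoin R (Set.range f)) :
    x ∈ ⨆ γ ∈ AddSubmonoid.closure (Set.range μ), W γ := by
  rw [← Subalgebra.mem_toSubmodule, Algebra.adjoin_eq_span] at hx
  refine Submodule.span_le.mpr (fun y hy => ?_) hx
  obtain ⟨γ, hγ, hyγ⟩ : ∃ γ ∈ AddSubmonoid.closure (Set.range μ), y ∈ W γ := by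
    induction hy using Submonoid.closure_induction with
    | mem y hy =>
      obtain ⟨i, rfl⟩ := hy
      exact ⟨μ i, AddSubmonoid.subset_closure ⟨i, rfl⟩, hf i⟩
    | one => exact ⟨0, zero_mem _, SetLike.one_mem_graded W⟩
    | mul y z _ _ hy hz =>
      obtain ⟨γ, hγ, hyγ⟩ := hy
      obtain ⟨δ, hδ, hzδ⟩ := hz
      exact ⟨γ + δ, add_mem hγ hδ, SetLike.mul_mem_graded hyγ hzδ⟩
  exact Submodule.mem_iSup_of_mem γ (Submodule.mem_iSup_of_mem hγ hyγ)

theorem degree_mem_closure_of_mem_adjoin (hind : iSupIndep W) (hf : ∀ i, f i ∈ W (μ i))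
    {x : A} {γ : Γ} (hx : x ∈ W γ) (hx0 : x ≠ 0) (hadj : x ∈ Algebra.adjoin R (Set.range f)) :
    γ ∈ AddSubmonoid.closure (Set.range μ) := by
  by_contra hγ
  exact hx0 (Submodule.disjoint_def.mp (hind.disjoint_biSup hγ) x hx
    (mem_iSup_closure_of_mem_adjoin hf hadj))

end Cone

section Laurent

variable {Γ : Type*} [AddCommGroup Γ] {n k : ℕ} {μ : Fin n → Γ}

theorem coneZ_subset_span : coneZ n k μ ⊆ Submodule.span ℤ (Set.range μ) := by
  rintro γ ⟨c, -, rfl⟩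
  exact Submodule.mem_span_range_iff_exists_fun ℤ |>.mpr ⟨c, rfl⟩

theorem mem_coneZ_of_add_nsmul_mem_closure {γ : Γ} (N : ℕ)
    (h : γ + N • ∑ j ∈ Finset.univ.filter (fun j : Fin n => (j : ℕ) < k), μ j ∈
      AddSubmonoid.closure (Set.range μ)) :
    γ ∈ coneZ n k μ := by
  obtain ⟨m, hm⟩ := AddSubmonoid.mem_closure_range_iff_of_fintype.mp h
  refine ⟨fun j => m j - if (j : ℕ) < k then (N : ℤ) else 0, fun j hj => ?_, ?_⟩
  · simp [not_lt.mpr hj]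
  · simp only [sub_smul, Finset.sum_sub_distrib, ite_smul, zero_smul, ← Finset.sum_filter,
      natCast_zsmul, ← Finset.smul_sum, ← hm]
    abel

theorem degree_mem_coneZ_of_mem {R A : Type*} [CommSemiring R] [CommSemiring A] [IsDomain A]
    [Algebra R A] {W : Γ → Submodule R A} [SetLike.GradedMonoid W] {f : Fin n → A}
    (hind : iSupIndep W) (hf : ∀ i, f i ∈ W (μ i)) (hne : ∀ i, f i ≠ 0)
    (hlaurent : ∀ a : A, ∃ N : ℕ,
      a * (∏ i ∈ Finset.univ.filter (fun i : Fin n => (i : ℕ) < k), f i) ^ N ∈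
        Algebra.adjoin R (Set.range f))
    {x : A} {γ : Γ} (hx : x ∈ W γ) (hx0 : x ≠ 0) : γ ∈ coneZ n k μ := by
  obtain ⟨N, hN⟩ := hlaurent x
  refine mem_coneZ_of_add_nsmul_mem_closure N (degree_mem_closure_of_mem_adjoin hind hf ?_ ?_ hN)
  · exact SetLike.mul_mem_graded hx
      (SetLike.pow_mem_graded N (SetLike.prod_mem_graded _ _ _ fun j _ => hf j))
  · exact mul_ne_zero hx0 (pow_ne_zero N (Finset.prod_ne_zero_iff.mpr fun j _ => hne j))

end Laurent

theorem stmt_14_general {A : Type*} [CommRing A] [IsDomain A]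
    [Algebra ℂ A] {Γ : Type*} [AddCommGroup Γ] (W : Γ → Submodule ℂ A)
    (hone : (1 : A) ∈ W 0)
    (hmul : ∀ (γ δ : Γ) (a b : A), a ∈ W γ → b ∈ W δ → a * b ∈ W (γ + δ))
    (hsum : (⨆ γ, W γ) = ⊤)
    (hind : iSupIndep W)
    (hunit : ∀ a : A, IsUnit a ↔ a ≠ 0 ∧ a ∈ W 0)
    (n k : ℕ) (f : Fin n → A) (μ : Fin n → Γ)
    (hf : ∀ i, f i ∈ W (μ i)) (hne : ∀ i, f i ≠ 0)
    (hli : ∀ c : Fin n → ℤ, ∑ i, c i • μ i = 0 → c = 0)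
    (hlaurent : ∀ a : A, ∃ N : ℕ,
      a * (∏ i ∈ Finset.univ.filter (fun i : Fin n => (i : ℕ) < k), f i) ^ N ∈
        Algebra.adjoin ℂ (Set.range f))
    (i : Fin n)
    (hdec : ∀ ν₁ ν₂ : Γ, μ i = ν₁ + ν₂ → ν₁ ≠ 0 → ν₂ ≠ 0 →
      W ν₁ ≠ ⊥ → W ν₂ ≠ ⊥ → ν₁ ∉ coneZ n k μ ∨ ν₂ ∉ coneZ n k μ) :
    Irreducible (f i) := by
  have : SetLike.GradedMonoid W := { one_mem := hone, mul_mem := fun γ δ a b => hmul γ δ a b }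
  have hμ : LinearIndependent ℤ μ :=
    Fintype.linearIndependent_iff.mpr fun c hc => congrFun (hli c hc)
  have hcone : ∀ γ (x : A), x ∈ W γ → x ≠ 0 → γ ∈ coneZ n k μ :=
    fun γ x hx hx0 => degree_mem_coneZ_of_mem hind hf hne hlaurent hx hx0
  have hspan : ∀ γ, W γ ≠ ⊥ → γ ∈ Submodule.span ℤ (Set.range μ) := fun γ hγ =>
    let ⟨x, hx, hx0⟩ := (Submodule.ne_bot_iff _).mp hγ
    coneZ_subset_span (hcone γ x hx hx0)
  refine ⟨fun hu => hμ.ne_zero i ?_, fun a b hab => ?_⟩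
  · by_contra h
    exact hne i (Submodule.disjoint_def.mp (hind.pairwiseDisjoint h) _ (hf i) ((hunit _).mp hu).2)
  have ha : a ≠ 0 := left_ne_zero_of_mul (hab ▸ hne i)
  have hb : b ≠ 0 := right_ne_zero_of_mul (hab ▸ hne i)
  obtain ⟨α, β, hαβ, haα, hbβ⟩ :=
    exists_add_eq_and_mem_of_mul_mem_of_linearIndependent hind hsum hμ hspan ha hb (hab ▸ hf i)
  by_cases hα : α = 0
  · exact .inl ((hunit a).mpr ⟨ha, hα ▸ haα⟩)
  by_cases hβ : β = 0
  · exact .inr ((hunit b).mpr ⟨hb, hβ ▸ hbβ⟩)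
  obtain h | h := hdec α β hαβ.symm hα hβ ((Submodule.ne_bot_iff _).mpr ⟨a, haα, ha⟩)
    ((Submodule.ne_bot_iff _).mpr ⟨b, hbβ, hb⟩)
  · exact (h (hcone α a haα ha)).elim
  · exact (h (hcone β b hbβ hb)).elim

/-- Abstract form of assertion 1) of Theorem 7: in a `Γ`-graded UFD `A` with at
most one-dimensional weight spaces, units being the nonzero constants, given
nonzero homogeneous `f₁, …, fₙ` of linearly independent weights `μ₁, …, μₙ` such
that `A ⊂ ℂ[f₁, …, fₙ, f₁⁻¹, …, f_k⁻¹]`, if for every decomposition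
`μᵢ = ν₁ + ν₂` into weights of non-unit homogeneous elements at least one of
`ν₁, ν₂` does not lie in `Z`, then `fᵢ` is irreducible. -/
theorem stmt_14 {A : Type*} [CommRing A] [IsDomain A] [UniqueFactorizationMonoid A]
    [Algebra ℂ A] {Γ : Type*} [AddCommGroup Γ] (W : Γ → Submodule ℂ A)
    (hone : (1 : A) ∈ W 0)
    (hmul : ∀ (γ δ : Γ) (a b : A), a ∈ W γ → b ∈ W δ → a * b ∈ W (γ + δ))
    (hsum : (⨆ γ, W γ) = ⊤)
    (hind : iSupIndep W)
    (hdim : ∀ (γ : Γ) (a b : A), a ∈ W γ → b ∈ W γ → b ≠ 0 → ∃ c : ℂ, a = c • b)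
    (hunit : ∀ a : A, IsUnit a ↔ a ≠ 0 ∧ a ∈ W 0)
    (n k : ℕ) (hkn : k ≤ n) (f : Fin n → A) (μ : Fin n → Γ)
    (hf : ∀ i, f i ∈ W (μ i)) (hne : ∀ i, f i ≠ 0)
    (hli : ∀ c : Fin n → ℤ, ∑ i, c i • μ i = 0 → c = 0)
    (hlaurent : ∀ a : A, ∃ N : ℕ,
      a * (∏ i ∈ Finset.univ.filter (fun i : Fin n => (i : ℕ) < k), f i) ^ N ∈
        Algebra.adjoin ℂ (Set.range f))
    (i : Fin n)
    (hdec : ∀ ν₁ ν₂ : Γ, μ i = ν₁ + ν₂ → ν₁ ≠ 0 → ν₂ ≠ 0 →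
      W ν₁ ≠ ⊥ → W ν₂ ≠ ⊥ → ν₁ ∉ coneZ n k μ ∨ ν₂ ∉ coneZ n k μ) :
    Irreducible (f i) :=
  stmt_14_general W hone hmul hsum hind hunit n k f μ hf hne hli hlaurent i hdec
end
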